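/- Let S ⊆ Gr([n], d+1) be symmetric (S° = S) and bi-convex, and let F ⊆ [n] with |F| = d+2 and F° = F. Then S ∩ Gr(F, d+1) is either empty or equal to all of Gr(F, d+1). -/
import Mathlib


/-- Lexicographic strict order on finite subsets of `ℕ`. -/
def LexLt (X Y : Finset ℕ) : Prop :=
  ∃ a, a ∈ X ∧ a ∉ Y ∧ ∀ b < a, (b ∈ X ↔ b ∈ Y)

/-- The stick `Gr(F, d+1)`: the `(d+1)`-element subsets of `F`. -/
def Stick (F : Finset ℕ) (d : ℕ) : Finset (Finset ℕ) :=
  Finset.powersetCard (d + 1) F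

/-- `T` is an initial interval of the stick `Gr(F, d+1)` in lexicographic order. -/
def IsInitial (F : Finset ℕ) (d : ℕ) (T : Finset (Finset ℕ)) : Prop :=
  T ⊆ Stick F d ∧ ∀ X ∈ Stick F d, ∀ Y ∈ T, LexLt X Y → X ∈ T

/-- `T` is a final interval of the stick `Gr(F, d+1)` in lexicographic order. -/
def IsFinal (F : Finset ℕ) (d : ℕ) (T : Finset (Finset ℕ)) : Prop :=
  T ⊆ Stick F d ∧ ∀ X ∈ Stick F d, ∀ Y ∈ T, LexLt Y X → X ∈ T

/-- Ziegler's condition: `S` is bi-convex if its intersection with every stick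
is an initial or final interval. -/
def BiConvex (n d : ℕ) (S : Finset (Finset ℕ)) : Prop :=
  ∀ F, F ⊆ Finset.Icc 1 n → F.card = d + 2 →
    IsInitial F d (S ∩ Stick F d) ∨ IsFinal F d (S ∩ Stick F d)

lemma mem_stick_iff {F : Finset ℕ} {d : ℕ} (hcard : F.card = d + 2) (X : Finset ℕ) :
    X ∈ Stick F d ↔ ∃ x ∈ F, X = F.erase x := by
  constructor
  · intro hX
    rw [Stick, Finset.mem_powersetCard] at hX
    obtain ⟨hsub, hc⟩ := hX
    have h1 : (F \ X).card = 1 := by rw [Finset.card_sdiff_of_subset hsub]; omega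
    obtain ⟨x, hx⟩ := Finset.card_eq_one.mp h1
    have hxF : x ∈ F := by
      have : x ∈ F \ X := hx ▸ Finset.mem_singleton_self x
      exact (Finset.mem_sdiff.mp this).1
    refine ⟨x, hxF, ?_⟩
    have h2 : F \ (F \ X) = X := Finset.sdiff_sdiff_eq_self hsub
    rw [hx] at h2
    rw [← h2, Finset.sdiff_singleton_eq_erase]
  · rintro ⟨x, hx, rfl⟩
    rw [Stick, Finset.mem_powersetCard]
    exact ⟨Finset.erase_subset _ _, by rw [Finset.card_erase_of_mem hx, hcard]; omega⟩

lemma lexlt_erase {F : Finset ℕ} {x y : ℕ} (hx : x ∈ F) (hy : y ∈ F) (hxy : x ≠ y) :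
    LexLt (F.erase x) (F.erase y) ↔ y < x := by
  constructor
  · rintro ⟨a, haX, haY, hbelow⟩
    have haF : a ∈ F := Finset.mem_of_mem_erase haX
    have hax : a ≠ x := (Finset.mem_erase.mp haX).1
    have hay : a = y := by
      by_contra h; exact haY (Finset.mem_erase.mpr ⟨h, haF⟩)
    subst hay
    rcases lt_trichotomy a x with h | h | h
    · exact h
    · exact absurd h hax
    · exfalso
      have hb := hbelow x h
      have hx2 : x ∈ F.erase a := Finset.mem_erase.mpr ⟨hxy, hx⟩
      exact Finset.notMem_erase x F (hb.mpr hx2)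
  · intro h
    refine ⟨y, Finset.mem_erase.mpr ⟨Ne.symm hxy, hy⟩,
      Finset.notMem_erase y F, ?_⟩
    intro b hb
    have hbx : b ≠ x := by omega
    have hby : b ≠ y := by omega
    simp [Finset.mem_erase, hbx, hby]

/-- If `S ⊆ Gr([n], d+1)` is symmetric (`S° = S`) and bi-convex, and `F` is a
`°`-symmetric packet of size `d+2`, then `S ∩ Gr(F, d+1)` is empty or all of
`Gr(F, d+1)`. -/
theorem symmetric_biConvex_stick (n d : ℕ) (S : Finset (Finset ℕ))
    (hS : S ⊆ Finset.powersetCard (d + 1) (Finset.Icc 1 n))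
    (hsym : S.image (fun X => X.image (fun i => n + 1 - i)) = S)
    (hB : BiConvex n d S)
    (F : Finset ℕ) (hF : F ⊆ Finset.Icc 1 n) (hcard : F.card = d + 2)
    (hFsym : F.image (fun i => n + 1 - i) = F) :
    S ∩ Stick F d = ∅ ∨ S ∩ Stick F d = Stick F d := by
  by_cases hne : S ∩ Stick F d = ∅
  · left; exact hne
  right
  obtain ⟨Y, hY⟩ := Finset.nonempty_iff_ne_empty.mpr hne
  have hYS : Y ∈ S := (Finset.mem_inter.mp hY).1
  have hYst : Y ∈ Stick F d := (Finset.mem_inter.mp hY).2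
  obtain ⟨y, hyF, rfl⟩ := (mem_stick_iff hcard _).mp hYst
  have hmemIcc : ∀ x ∈ F, 1 ≤ x ∧ x ≤ n := fun x hx => Finset.mem_Icc.mp (hF hx)
  have hσF : ∀ x ∈ F, n + 1 - x ∈ F := by
    intro x hx; rw [← hFsym]; exact Finset.mem_image_of_mem _ hx
  have hσσ : ∀ x ∈ F, n + 1 - (n + 1 - x) = x := by
    intro x hx; have := hmemIcc x hx; omega
  have himg : ∀ x ∈ F, (F.erase x).image (fun i => n + 1 - i) = F.erase (n + 1 - x) := by
    intro x hx
    ext a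
    simp only [Finset.mem_image, Finset.mem_erase]
    constructor
    · rintro ⟨b, ⟨hbx, hbF⟩, rfl⟩
      refine ⟨?_, hσF b hbF⟩
      have h1 := hσσ b hbF
      have h2 := hσσ x hx
      omega
    · rintro ⟨hax, haF⟩
      refine ⟨n + 1 - a, ⟨?_, hσF a haF⟩, hσσ a haF⟩
      have h1 := hσσ a haF
      have h2 := hmemIcc x hx
      omega
  have hstick : ∀ x ∈ F, F.erase x ∈ Stick F d :=
    fun x hx => (mem_stick_iff hcard _).mpr ⟨x, hx, rfl⟩
  have hSinv : ∀ Z ∈ S, Z.image (fun i => n + 1 - i) ∈ S := by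
    intro Z hZ; rw [← hsym]; exact Finset.mem_image_of_mem _ hZ
  have hσne : ∀ x ∈ F, ∀ z ∈ F, z ≠ x → (n + 1 - x) ≠ (n + 1 - z) := by
    intro x hx z hz hzx
    have h1 := hσσ x hx; have h2 := hσσ z hz; omega
  have hσlt : ∀ x ∈ F, ∀ z ∈ F, z < x → (n + 1 - x) < (n + 1 - z) := by
    intro x hx z hz h
    have h1 := hmemIcc x hx; have h2 := hmemIcc z hz; omega
  have key : ∀ z ∈ F, F.erase z ∈ S := by
    intro z hz
    by_cases hzy : z = y
    · subst hzy; exact hYS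
    have hσy : n + 1 - y ∈ F := hσF y hyF
    have hσz : n + 1 - z ∈ F := hσF z hz
    have hσYS : F.erase (n + 1 - y) ∈ S := by
      have := hSinv _ hYS
      rwa [himg y hyF] at this
    have hσYT : F.erase (n + 1 - y) ∈ S ∩ Stick F d :=
      Finset.mem_inter.mpr ⟨hσYS, hstick _ hσy⟩
    have hYT : F.erase y ∈ S ∩ Stick F d := hY
    have hback : F.erase (n + 1 - z) ∈ S → F.erase z ∈ S := by
      intro h
      have := hSinv _ h
      rwa [himg _ hσz, hσσ z hz] at this
    rcases hB F hF hcard with ⟨hsub, hinit⟩ | ⟨hsub, hfin⟩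
    · rcases Nat.lt_or_ge z y with h | h
      · -- use the σ-image: LexLt (erase σz) (erase σy) since σy < σz
        have hlt : LexLt (F.erase (n + 1 - z)) (F.erase (n + 1 - y)) :=
          (lexlt_erase hσz hσy (hσne z hz y hyF (Ne.symm hzy))).mpr (hσlt y hyF z hz h)
        have := hinit _ (hstick _ hσz) _ hσYT hlt
        exact hback (Finset.mem_inter.mp this).1
      · have hyz : y < z := lt_of_le_of_ne h (Ne.symm hzy)
        have hlt : LexLt (F.erase z) (F.erase y) :=
          (lexlt_erase hz hyF hzy).mpr hyz
        have := hinit _ (hstick _ hz) _ hYT hlt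
        exact (Finset.mem_inter.mp this).1
    · rcases Nat.lt_or_ge y z with h | h
      · have hlt : LexLt (F.erase (n + 1 - y)) (F.erase (n + 1 - z)) :=
          (lexlt_erase hσy hσz (hσne y hyF z hz hzy)).mpr (hσlt z hz y hyF h)
        have := hfin _ (hstick _ hσz) _ hσYT hlt
        exact hback (Finset.mem_inter.mp this).1
      · have hzy' : z < y := lt_of_le_of_ne h hzy
        have hlt : LexLt (F.erase y) (F.erase z) :=
          (lexlt_erase hyF hz (Ne.symm hzy)).mpr hzy'
        have := hfin _ (hstick _ hz) _ hYT hlt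
        exact (Finset.mem_inter.mp this).1
  apply Finset.inter_eq_right.mpr
  intro X hX
  obtain ⟨x, hx, rfl⟩ := (mem_stick_iff hcard _).mp hX
  exact key x hx
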